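/- Let p, u ∈ ℝ³ \ {0} be non-proportional and let f ∈ P satisfy f(p) = f(u) = 0 and have vanishing coefficient of t² in the polynomial t ↦ f(p + t·u). Then f vanishes at every point of the plane spanned by p and u, and for any nonzero linear form l ∈ H₁ vanishing on span{p, u} there exists a quadratic form q ∈ H₂ with q ≥ 0 on ℝ³ such that f = l²·q. -/

import Mathlib

open MvPolynomial

noncomputable section

/-- The space of ternary (3-variable) real polynomials. `H d` corresponds to the
homogeneous polynomials of degree `d` via the predicate `IsHomogeneous`. -/
abbrev MvP : Type := MvPolynomial (Fin 3) ℝ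

/-- The cone `P` of nonnegative ternary quartics. -/
def Pcone : Set MvP :=
  {f | f.IsHomogeneous 4 ∧ ∀ a : Fin 3 → ℝ, 0 ≤ eval a f}

/-- `F` is a face of the cone `P`. -/
def IsFace (F : Set MvP) : Prop :=
  F ⊆ Pcone ∧
  (∀ a ∈ F, ∀ b ∈ F, a + b ∈ F) ∧
  (∀ c : ℝ, 0 ≤ c → ∀ a ∈ F, c • a ∈ F) ∧
  (∀ a ∈ Pcone, ∀ b ∈ Pcone, a + b ∈ F → a ∈ F ∧ b ∈ F)

/-- `J_F = {q ∈ H₂ : q² ∈ F}`. -/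
def Jset (F : Set MvP) : Set MvP :=
  {q | q.IsHomogeneous 2 ∧ q ^ 2 ∈ F}

/-- The univariate polynomial `t ↦ f (p + t • v)`. -/
def lineP (p v : Fin 3 → ℝ) (f : MvP) : Polynomial ℝ :=
  MvPolynomial.aeval (fun i => Polynomial.C (p i) + Polynomial.C (v i) * Polynomial.X) f

/-- The face `F_p = {f ∈ P : f(p) = 0}`. -/
def Fp (p : Fin 3 → ℝ) : Set MvP := {f ∈ Pcone | eval p f = 0}

/-- The face `F_{(p,v)}`: members of `P` vanishing at `p` whose restriction to the line
`t ↦ p + t v` has vanishing `t²`-coefficient. -/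
def Fpv (p v : Fin 3 → ℝ) : Set MvP :=
  {f ∈ Pcone | eval p f = 0 ∧ (lineP p v f).coeff 2 = 0}

/-!
On the line `t ↦ p + t u`, `f` restricts to a nonnegative quartic `g` with `g(0) = 0`, so also
`g'(0) = 0`; with the vanishing `t²`-coefficient and the leading coefficient `f(u) = 0` this
leaves `g = c t³`, which is nonnegative only for `c = 0`. Homogeneity spreads the vanishing from
the line to the plane `span {p, u}`.

After a linear change of coordinates turning `l` into `x₀`, the plane becomes `x₀ = 0` and
`f = x₀ G`. Then `t ↦ t G(t, s)` is nonnegative with a zero at `t = 0`, so its linear coefficient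
`G(0, s)` vanishes as well, whence `f = x₀² Q`; `Q ≥ 0` off the plane, hence everywhere by
continuity. `Q` is homogeneous because `l²` is a homogeneous non-zero-divisor.
-/

theorem Finsupp.prod_pow_eq_prod_map_toMultiset {σ M : Type*} [CommMonoid M] (d : σ →₀ ℕ)
    (g : σ → M) : (d.prod fun i k => g i ^ k) = (d.toMultiset.map g).prod := by
  rw [Finsupp.toMultiset_map, Finsupp.prod_toMultiset,
    Finsupp.prod_mapDomain_index (fun _ => pow_zero _) (fun _ _ _ => pow_add _ _ _)]

namespace Polynomial

theorem coeff_one_eq_zero_of_nonneg {g : ℝ[X]} (hg : ∀ t, 0 ≤ g.eval t) (h0 : g.eval 0 = 0) :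
    g.coeff 1 = 0 := by
  have hmin : IsLocalMin (fun t => g.eval t) 0 :=
    Filter.Eventually.of_forall fun t => by simpa [h0] using hg t
  simpa [Polynomial.deriv, ← coeff_zero_eq_eval_zero, coeff_derivative]
    using hmin.deriv_eq_zero

theorem eq_zero_of_nonneg_of_natDegree_le_four {g : ℝ[X]} (hg : ∀ t, 0 ≤ g.eval t)
    (hdeg : g.natDegree ≤ 4) (h0 : g.eval 0 = 0) (h2 : g.coeff 2 = 0) (h4 : g.coeff 4 = 0) :
    g = 0 := by
  have h1 := coeff_one_eq_zero_of_nonneg hg h0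
  have hcubic : g = C (g.coeff 3) * X ^ 3 := by
    ext k
    rcases k with _ | _ | _ | _ | _ | k
    · simpa [coeff_zero_eq_eval_zero] using h0
    · simpa using h1
    · simpa using h2
    · simp
    · simpa using h4
    · simpa using coeff_eq_zero_of_natDegree_lt (by omega)
  have hpos := hg 1
  have hneg := hg (-1)
  rw [hcubic] at hpos hneg ⊢
  simp only [eval_mul, eval_C, eval_pow, eval_X] at hpos hneg
  rw [show g.coeff 3 = 0 by linarith, C_0, zero_mul]

end Polynomial

theorem Continuous.nonneg_of_forall_ne_zero {φ : ℝ → ℝ} (hφ : Continuous φ)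
    (h : ∀ t ≠ 0, 0 ≤ φ t) (t : ℝ) : 0 ≤ φ t := by
  have hsub := (isClosed_le continuous_const hφ).closure_subset_iff.2 fun s hs => h s hs
  exact hsub ((dense_compl_singleton (0 : ℝ)).closure_eq ▸ Set.mem_univ t)

theorem exists_basis_repr_zero_eq {K V : Type*} [Field K] [AddCommGroup V] [Module K V] {n : ℕ}
    (hn : Module.finrank K V = n + 1) {v : Fin n → V} (hv : LinearIndependent K v)
    {ℓ : V →ₗ[K] K} (hℓ : ℓ ≠ 0) (hℓv : ∀ i, ℓ (v i) = 0) :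
    ∃ b : Module.Basis (Fin (n + 1)) K V, (∀ x, b.repr x 0 = ℓ x) ∧ ∀ i, b i.succ = v i := by
  obtain ⟨w, hw⟩ := LinearMap.surjective hℓ 1
  have hspan : Submodule.span K (Set.range v) ≤ LinearMap.ker ℓ :=
    Submodule.span_le.2 (Set.range_subset_iff.2 hℓv)
  have hind : LinearIndependent K (Fin.cons w v : Fin (n + 1) → V) :=
    linearIndependent_finCons.2 ⟨hv, fun hmem => by simpa [hw] using hspan hmem⟩
  have : FiniteDimensional K V := Module.finite_of_finrank_eq_succ hn
  let b := basisOfLinearIndependentOfCardEqFinrank hind (by simp [hn])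
  have hb : ⇑b = Fin.cons w v := coe_basisOfLinearIndependentOfCardEqFinrank hind _
  refine ⟨b, fun x => ?_, fun i => by rw [hb, Fin.cons_succ]⟩
  have hcoord : b.coord 0 = ℓ := b.ext fun j => by
    rw [Module.Basis.coord_apply, Module.Basis.repr_self, hb]
    cases j using Fin.cases with
    | zero => simp [hw]
    | succ i => simp [hℓv]
  rw [← hcoord, Module.Basis.coord_apply]

namespace MvPolynomial

section Homogeneous

variable {σ R : Type*} [CommRing R]

theorem IsHomogeneous.card_toMultiset {f : MvPolynomial σ R} {n : ℕ} (hf : f.IsHomogeneous n)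
    {d : σ →₀ ℕ} (hd : d ∈ f.support) : Multiset.card d.toMultiset = n := by
  rw [Finsupp.card_toMultiset, hf.degree_eq_sum_deg_support hd]
  rfl

theorem IsHomogeneous.eval_smul {f : MvPolynomial σ R} {n : ℕ} (hf : f.IsHomogeneous n) (c : R)
    (x : σ → R) : eval (c • x) f = c ^ n * eval x f := by
  conv_lhs => rw [f.as_sum]
  conv_rhs => rw [f.as_sum]
  rw [map_sum, map_sum, Finset.mul_sum]
  refine Finset.sum_congr rfl fun d hd => ?_
  simp only [eval_monomial, Finsupp.prod_pow_eq_prod_map_toMultiset, Pi.smul_apply, smul_eq_mul,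
    Multiset.prod_map_mul, Multiset.map_const', Multiset.prod_replicate, hf.card_toMultiset hd]
  ring

theorem IsHomogeneous.natDegree_aeval_le {f : MvPolynomial σ R} {n : ℕ} {g : σ → Polynomial R}
    (hf : f.IsHomogeneous n) (hg : ∀ i, (g i).natDegree ≤ 1) :
    (MvPolynomial.aeval g f).natDegree ≤ n := by
  rw [f.as_sum, map_sum]
  refine Polynomial.natDegree_sum_le_of_forall_le _ _ fun d hd => ?_
  rw [aeval_monomial, Finsupp.prod_pow_eq_prod_map_toMultiset, Polynomial.algebraMap_eq]
  refine (Polynomial.natDegree_C_mul_le _ _).trans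
    ((Polynomial.natDegree_multiset_prod_le _).trans ?_)
  simpa [hf.card_toMultiset hd] using Multiset.sum_le_card_nsmul
    ((d.toMultiset.map g).map Polynomial.natDegree) 1 (by simpa using fun i _ => hg i)

theorem IsHomogeneous.coeff_aeval {f : MvPolynomial σ R} {n : ℕ} {g : σ → Polynomial R}
    (hf : f.IsHomogeneous n) (hg : ∀ i, (g i).natDegree ≤ 1) :
    (MvPolynomial.aeval g f).coeff n = eval (fun i => (g i).coeff 1) f := by
  conv_lhs => rw [f.as_sum]
  conv_rhs => rw [f.as_sum]
  rw [map_sum, map_sum, Polynomial.finsetSum_coeff]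
  refine Finset.sum_congr rfl fun d hd => ?_
  rw [aeval_monomial, Finsupp.prod_pow_eq_prod_map_toMultiset, Polynomial.algebraMap_eq,
    Polynomial.coeff_C_mul, eval_monomial, Finsupp.prod_pow_eq_prod_map_toMultiset,
    ← hf.card_toMultiset hd, ← mul_one (Multiset.card _), ← Multiset.card_map g,
    Polynomial.coeff_multiset_prod_of_natDegree_le _ _ (by simpa using fun i _ => hg i),
    Multiset.map_map]
  rfl

theorem IsHomogeneous.exists_linearMap_eval_eq [Fintype σ] {l : MvPolynomial σ R}
    (hl : l.IsHomogeneous 1) : ∃ ℓ : (σ → R) →ₗ[R] R, ∀ x, eval x l = ℓ x := by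
  have hmem : l ∈ Submodule.span R (Set.range X) := by
    rw [← homogeneousSubmodule_one_eq_span_X]
    exact hl
  obtain ⟨c, rfl⟩ := (Submodule.mem_span_range_iff_exists_fun R).1 hmem
  exact ⟨∑ i, c i • LinearMap.proj i, fun x => by simp⟩

attribute [local instance] MvPolynomial.gradedAlgebra in
theorem homogeneousComponent_mul_of_isHomogeneous_left {a : MvPolynomial σ R} {m : ℕ}
    (ha : a.IsHomogeneous m) (b : MvPolynomial σ R) (k : ℕ) :
    homogeneousComponent (m + k) (a * b) = a * homogeneousComponent k b := by
  simp only [← decomposition.decompose'_apply]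
  exact DirectSum.coe_decompose_mul_add_of_left_mem _ ((mem_homogeneousSubmodule _ _).2 ha)

theorem IsHomogeneous.of_mul_left [IsDomain R] {a b : MvPolynomial σ R} {m n : ℕ}
    (ha : a.IsHomogeneous m) (ha0 : a ≠ 0) (hab : (a * b).IsHomogeneous (m + n)) :
    b.IsHomogeneous n := by
  intro d hd
  by_contra hdn
  have hk : homogeneousComponent (Finsupp.weight 1 d) b = 0 := by
    have := homogeneousComponent_mul_of_isHomogeneous_left ha b (Finsupp.weight 1 d)
    rw [homogeneousComponent_of_mem ((mem_homogeneousSubmodule _ _).2 hab),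
      if_neg (by omega)] at this
    exact (mul_eq_zero.1 this.symm).resolve_left ha0
  have := congrArg (coeff d) hk
  rw [coeff_homogeneousComponent, if_pos (by rw [Finsupp.degree_eq_weight_one]; rfl),
    coeff_zero] at this
  exact hd this

end Homogeneous

section LinearSubst

variable {σ R : Type*} [Fintype σ] [DecidableEq σ] [CommRing R]

def linearSubst (A : (σ → R) →ₗ[R] σ → R) : MvPolynomial σ R →ₐ[R] MvPolynomial σ R :=
  bind₁ fun i => ∑ j, C (LinearMap.toMatrix' A i j) * X j

theorem eval_linearSubst (A : (σ → R) →ₗ[R] σ → R) (F : MvPolynomial σ R) (x : σ → R) :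
    eval x (linearSubst A F) = eval (A x) F := by
  change eval₂Hom (RingHom.id R) x _ = _
  rw [linearSubst, eval₂Hom_bind₁, ← LinearMap.toMatrix'_mulVec]
  change eval _ F = _
  congr 2
  funext i
  simp [Matrix.mulVec, dotProduct, mul_comm]

theorem linearSubst_linearSubst [IsDomain R] [Infinite R] {A B : (σ → R) →ₗ[R] σ → R}
    (h : ∀ x, B (A x) = x) (F : MvPolynomial σ R) : linearSubst A (linearSubst B F) = F :=
  funext fun x => by rw [eval_linearSubst, eval_linearSubst, h]

end LinearSubst

section Divisibility

variable {n : ℕ}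

theorem X_zero_dvd_of_forall_eval_eq_zero {R : Type*} [CommRing R] [IsDomain R] [Infinite R]
    {F : MvPolynomial (Fin (n + 1)) R} (h : ∀ x : Fin (n + 1) → R, x 0 = 0 → eval x F = 0) :
    X 0 ∣ F := by
  have hcoeff : (finSuccEquiv R n F).coeff 0 = 0 := funext fun s => by
    rw [map_zero, ← h (Fin.cons 0 s) rfl, eval_eq_eval_mv_eval',
      ← Polynomial.coeff_zero_eq_eval_zero, Polynomial.coeff_map]
  have := map_dvd (finSuccEquiv R n).symm (Polynomial.X_dvd_iff.2 hcoeff)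
  rwa [← finSuccEquiv_X_zero, AlgEquiv.symm_apply_apply, AlgEquiv.symm_apply_apply] at this

theorem eval_eq_zero_of_nonneg_X_zero_mul {G : MvPolynomial (Fin (n + 1)) ℝ}
    (h : ∀ x, 0 ≤ eval x (X 0 * G)) (x : Fin (n + 1) → ℝ) (hx : x 0 = 0) : eval x G = 0 := by
  obtain ⟨s, rfl⟩ : ∃ s, x = Fin.cons 0 s := ⟨Fin.tail x, by rw [← hx, Fin.cons_self_tail]⟩
  set B := (finSuccEquiv ℝ n G).map (eval s)
  have hslice : ∀ t, (Polynomial.X * B).eval t = eval (Fin.cons t s) (X 0 * G) := fun t => by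
    rw [eval_eq_eval_mv_eval', map_mul, finSuccEquiv_X_zero, Polynomial.map_mul,
      Polynomial.map_X]
  have hcoeff := Polynomial.coeff_one_eq_zero_of_nonneg (fun t => hslice t ▸ h _) (by simp)
  rwa [Polynomial.coeff_X_mul, Polynomial.coeff_zero_eq_eval_zero,
    ← eval_eq_eval_mv_eval'] at hcoeff

theorem nonneg_of_nonneg_X_zero_sq_mul {Q : MvPolynomial (Fin (n + 1)) ℝ}
    (h : ∀ x, 0 ≤ eval x (X 0 ^ 2 * Q)) (x : Fin (n + 1) → ℝ) : 0 ≤ eval x Q := by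
  have hslice : Continuous fun t => eval (Fin.cons t (Fin.tail x) : Fin (n + 1) → ℝ) Q :=
    (continuous_eval Q).comp (by fun_prop)
  have := hslice.nonneg_of_forall_ne_zero (fun t ht => by
    have := h (Fin.cons t (Fin.tail x))
    rw [map_mul, map_pow, eval_X, Fin.cons_zero] at this
    exact nonneg_of_mul_nonneg_right this (pow_two_pos_of_ne_zero ht)) (x 0)
  rwa [Fin.cons_self_tail] at this

theorem exists_eq_X_zero_sq_mul_of_nonneg {F : MvPolynomial (Fin (n + 1)) ℝ}
    (hF : ∀ x, 0 ≤ eval x F) (hF0 : ∀ x : Fin (n + 1) → ℝ, x 0 = 0 → eval x F = 0) :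
    ∃ Q, F = X 0 ^ 2 * Q ∧ ∀ x, 0 ≤ eval x Q := by
  obtain ⟨G, rfl⟩ := X_zero_dvd_of_forall_eval_eq_zero hF0
  obtain ⟨Q, rfl⟩ := X_zero_dvd_of_forall_eval_eq_zero (eval_eq_zero_of_nonneg_X_zero_mul hF)
  refine ⟨Q, by ring, nonneg_of_nonneg_X_zero_sq_mul fun x => ?_⟩
  rw [sq, mul_assoc]
  exact hF x

theorem exists_eq_sq_mul_of_nonneg_of_basis
    (b : Module.Basis (Fin (n + 1)) ℝ (Fin (n + 1) → ℝ)) {l f : MvPolynomial (Fin (n + 1)) ℝ}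
    (hl : ∀ x, eval x l = b.repr x 0) (hf : ∀ x, 0 ≤ eval x f)
    (hf0 : ∀ x, b.repr x 0 = 0 → eval x f = 0) :
    ∃ q, f = l ^ 2 * q ∧ ∀ x, 0 ≤ eval x q := by
  set A := b.equivFun.symm.toLinearMap
  set B := b.equivFun.toLinearMap
  obtain ⟨Q, hfQ, hQ⟩ := exists_eq_X_zero_sq_mul_of_nonneg (F := linearSubst A f)
    (fun c => by rw [eval_linearSubst]; exact hf _)
    (fun c hc => by
      rw [eval_linearSubst]
      exact hf0 _ (by rwa [← b.equivFun_apply, LinearEquiv.coe_coe, LinearEquiv.apply_symm_apply]))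
  have hX : linearSubst B (X 0) = l := funext fun x => by
    rw [eval_linearSubst, eval_X, hl]
    rfl
  refine ⟨linearSubst B Q, ?_, fun x => by rw [eval_linearSubst]; exact hQ _⟩
  calc f = linearSubst B (linearSubst A f) :=
        (linearSubst_linearSubst (fun x => b.equivFun.symm_apply_apply x) f).symm
    _ = l ^ 2 * linearSubst B Q := by rw [hfQ, map_mul, map_pow, hX]

theorem exists_eq_sq_mul_of_nonneg_of_vanishing {v : Fin n → Fin (n + 1) → ℝ}
    (hv : LinearIndependent ℝ v) {l f : MvPolynomial (Fin (n + 1)) ℝ} (hl : l.IsHomogeneous 1)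
    (hl0 : l ≠ 0) (hlv : ∀ a ∈ Submodule.span ℝ (Set.range v), eval a l = 0)
    (hf : ∀ x, 0 ≤ eval x f) (hfv : ∀ a ∈ Submodule.span ℝ (Set.range v), eval a f = 0) :
    ∃ q, f = l ^ 2 * q ∧ ∀ x, 0 ≤ eval x q := by
  obtain ⟨ℓ, hℓ⟩ := hl.exists_linearMap_eval_eq
  have hℓ0 : ℓ ≠ 0 := fun h => hl0 (funext fun x => by simp [hℓ, h])
  obtain ⟨b, hb0, hbv⟩ := exists_basis_repr_zero_eq (by simp) hv hℓ0 fun i => by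
    rw [← hℓ]
    exact hlv _ (Submodule.subset_span ⟨i, rfl⟩)
  refine exists_eq_sq_mul_of_nonneg_of_basis b (fun x => by rw [hℓ, hb0]) hf fun x hx => hfv x ?_
  rw [← b.sum_repr x, Fin.sum_univ_succ, hx, zero_smul, zero_add]
  exact Submodule.sum_mem _ fun i _ =>
    Submodule.smul_mem _ _ (Submodule.subset_span ⟨i, (hbv i).symm⟩)

end Divisibility

end MvPolynomial

theorem lineP_eval (p v : Fin 3 → ℝ) (f : MvP) (t : ℝ) :
    (lineP p v f).eval t = eval (p + t • v) f := by
  rw [lineP, ← Polynomial.coe_aeval_eq_eval, ← AlgHom.comp_apply, MvPolynomial.comp_aeval]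
  change eval _ f = _
  congr 2
  funext i
  simp only [map_add, map_mul, Polynomial.aeval_C, Polynomial.aeval_X, Algebra.algebraMap_self,
    RingHom.id_apply, Pi.add_apply, Pi.smul_apply, smul_eq_mul]
  ring

theorem natDegree_lineP_le (p v : Fin 3 → ℝ) {f : MvP} {n : ℕ} (hf : f.IsHomogeneous n) :
    (lineP p v f).natDegree ≤ n :=
  hf.natDegree_aeval_le fun i => by rw [add_comm]; exact Polynomial.natDegree_linear_le

theorem coeff_lineP (p v : Fin 3 → ℝ) {f : MvP} {n : ℕ} (hf : f.IsHomogeneous n) :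
    (lineP p v f).coeff n = eval v f := by
  rw [lineP, hf.coeff_aeval fun i => by rw [add_comm]; exact Polynomial.natDegree_linear_le]
  simp

theorem eval_eq_zero_of_mem_span_pair {p u : Fin 3 → ℝ} {f : MvP} (hf : f ∈ Pcone)
    (hfp : eval p f = 0) (hfu : eval u f = 0) (ht2 : (lineP p u f).coeff 2 = 0) :
    ∀ a ∈ Submodule.span ℝ ({p, u} : Set (Fin 3 → ℝ)), eval a f = 0 := by
  obtain ⟨hhom, hnn⟩ := hf
  have hline : lineP p u f = 0 :=
    Polynomial.eq_zero_of_nonneg_of_natDegree_le_four (fun t => lineP_eval p u f t ▸ hnn _)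
      (natDegree_lineP_le p u hhom) (by simpa [lineP_eval] using hfp) ht2
      (by rw [coeff_lineP p u hhom, hfu])
  intro a ha
  obtain ⟨c, d, rfl⟩ := Submodule.mem_span_pair.mp ha
  rcases eq_or_ne c 0 with rfl | hc
  · simp [hhom.eval_smul, hfu]
  · have hscale : c • p + d • u = c • (p + (d / c) • u) := by
      rw [smul_add, smul_smul, mul_div_cancel₀ _ hc]
    rw [hscale, hhom.eval_smul, ← lineP_eval, hline, Polynomial.eval_zero, mul_zero]

theorem stmt_9_general (p u : Fin 3 → ℝ) (hp : p ≠ 0) (hpu : ∀ c : ℝ, u ≠ c • p)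
    (f : MvP) (hf : f ∈ Pcone) (hfp : eval p f = 0) (hfu : eval u f = 0)
    (ht2 : (lineP p u f).coeff 2 = 0) :
    (∀ a ∈ Submodule.span ℝ ({p, u} : Set (Fin 3 → ℝ)), eval a f = 0) ∧
    ∀ l : MvP, l.IsHomogeneous 1 → l ≠ 0 →
      (∀ a ∈ Submodule.span ℝ ({p, u} : Set (Fin 3 → ℝ)), eval a l = 0) →
      ∃ q : MvP, q.IsHomogeneous 2 ∧ (∀ x : Fin 3 → ℝ, 0 ≤ eval x q) ∧ f = l ^ 2 * q := by
  have hvanish := eval_eq_zero_of_mem_span_pair hf hfp hfu ht2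
  refine ⟨hvanish, fun l hl hl0 hlv => ?_⟩
  have hind : LinearIndependent ℝ ![u, p] :=
    linearIndependent_fin2.2 ⟨by simpa using hp, fun a h => hpu a (by simpa using h.symm)⟩
  have hspan : Submodule.span ℝ (Set.range ![u, p]) = Submodule.span ℝ {p, u} := by
    rw [Matrix.range_cons_cons_empty, Set.pair_comm]
  rw [← hspan] at hvanish hlv
  obtain ⟨q, rfl, hq⟩ :=
    MvPolynomial.exists_eq_sq_mul_of_nonneg_of_vanishing hind hl hl0 hlv hf.2 hvanish
  exact ⟨q, (hl.pow 2).of_mul_left (pow_ne_zero 2 hl0) hf.1, hq, rfl⟩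

/-- if `f ∈ P` vanishes at non-proportional `p, u` and the `t²`-coefficient of
`t ↦ f(p + t u)` vanishes, then `f` vanishes on the plane spanned by `p` and `u`, and `f`
is `l²` times a nonnegative quadratic form for any nonzero linear form `l` vanishing on
that plane. -/
theorem stmt_9 (p u : Fin 3 → ℝ) (hp : p ≠ 0) (hu : u ≠ 0) (hpu : ∀ c : ℝ, u ≠ c • p)
    (f : MvP) (hf : f ∈ Pcone) (hfp : eval p f = 0) (hfu : eval u f = 0)
    (ht2 : (lineP p u f).coeff 2 = 0) :
    (∀ a ∈ Submodule.span ℝ ({p, u} : Set (Fin 3 → ℝ)), eval a f = 0) ∧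
    ∀ l : MvP, l.IsHomogeneous 1 → l ≠ 0 →
      (∀ a ∈ Submodule.span ℝ ({p, u} : Set (Fin 3 → ℝ)), eval a l = 0) →
      ∃ q : MvP, q.IsHomogeneous 2 ∧ (∀ x : Fin 3 → ℝ, 0 ≤ eval x q) ∧ f = l ^ 2 * q :=
  stmt_9_general p u hp hpu f hf hfp hfu ht2
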